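/- Suppose T is a complete, consistent first-order theory in a language L extended by countably many constant symbols, such that for every model M of T, the definable closure N^M of the interpretations of the constants in the reduct of M to L is an elementary substructure of that reduct. Then the definable closure does not depend on the model: for any two models M and P of T, the structures N^M and N^P are isomorphic. -/

import Mathlib

open FirstOrder FirstOrder.Language

/-- The definable closure (over the base language `L`) of the interpretations
`c : ℕ → M` of countably many constants in an `L`-structure `M`:
all elements that are the unique realization of an `L`-formula with
parameters among the constants. -/
def dclOfConstants {L : Language} {M : Type*} [L.Structure M] (c : ℕ → M) : Set M :=
  {a : M | ∃ (k : ℕ) (φ : L.Formula (Fin (k + 1))) (ι : Fin k → ℕ),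
    φ.Realize (Fin.cons a (c ∘ ι)) ∧
    ∀ x : M, φ.Realize (Fin.cons x (c ∘ ι)) → x = a}

namespace DclAux

variable {L : Language} {M P : Type*} [L.Structure M] [L.Structure P]

/-- `φ` defines `a` over the constants `c`. -/
def Ddef (c : ℕ → M) (φ : L.Formula (ℕ ⊕ Fin 1)) (a : M) : Prop :=
  φ.Realize (Sum.elim c (fun _ => a)) ∧ ∀ x : M, φ.Realize (Sum.elim c (fun _ => x)) → x = a

def gA {k : ℕ} (ι : Fin k → ℕ) : Fin (k + 1) → ℕ ⊕ Fin 1 :=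
  Fin.cons (Sum.inr 0) (fun j => Sum.inl (ι j))

lemma realize_relabel_gA (c : ℕ → M) {k} (φ₀ : L.Formula (Fin (k + 1)))
    (ι : Fin k → ℕ) (x : M) :
    (φ₀.relabel (gA ι)).Realize (Sum.elim c (fun _ => x)) ↔
      φ₀.Realize (Fin.cons x (c ∘ ι)) := by
  rw [Formula.realize_relabel]
  refine iff_of_eq (congrArg _ ?_)
  funext i
  refine Fin.cases ?_ (fun j => ?_) i <;> simp [gA]

lemma mem_dcl_iff (c : ℕ → M) (a : M) :
    a ∈ dclOfConstants (L := L) c ↔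
      ∃ (k : ℕ) (φ₀ : L.Formula (Fin (k + 1))) (ι : Fin k → ℕ),
        Ddef c (φ₀.relabel (gA ι)) a := by
  unfold dclOfConstants Ddef
  simp only [Set.mem_setOf_eq, realize_relabel_gA]

lemma funext_fin1 {α : Type*} (i : Fin 1 → α) : i = fun _ => i 0 := by
  funext j; rw [Subsingleton.elim j 0]

noncomputable def iExsF {α β γ : Type*} [Finite γ] (f : α → β ⊕ γ) (φ : L.Formula α) :
    L.Formula β :=
  Formula.iExs γ (φ.relabel f)

noncomputable def iAllsF {α β γ : Type*} [Finite γ] (f : α → β ⊕ γ) (φ : L.Formula α) :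
    L.Formula β :=
  Formula.iAlls γ (φ.relabel f)

lemma realize_iExsF {α β γ : Type*} [Finite γ] (f : α → β ⊕ γ) (φ : L.Formula α)
    (v : β → M) : (iExsF f φ).Realize v ↔ ∃ (i : γ → M), φ.Realize (fun a => Sum.elim v i (f a)) := by
  rw [iExsF, Formula.realize_iExs]
  simp only [Formula.realize_relabel]
  exact Iff.rfl

lemma realize_iAllsF {α β γ : Type*} [Finite γ] (f : α → β ⊕ γ) (φ : L.Formula α)
    (v : β → M) : (iAllsF f φ).Realize v ↔ ∀ (i : γ → M), φ.Realize (fun a => Sum.elim v i (f a)) := by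
  rw [iAllsF, Formula.realize_iAlls]
  simp only [Formula.realize_relabel]
  exact Iff.rfl

/-- The sentence (over the constants) saying `∃! x, φ x`. -/
noncomputable def uniqueSentence (φ : L.Formula (ℕ ⊕ Fin 1)) : L.Formula ℕ :=
  iExsF (β := ℕ) (γ := Fin 1) id
    (φ ⊓ iAllsF (β := ℕ ⊕ Fin 1) (γ := Fin 1)
      (Sum.elim (fun m => Sum.inl (Sum.inl m)) ![Sum.inl (Sum.inr 0), Sum.inr 0])
      ((φ.relabel (Sum.map id (fun _ => (1 : Fin 2)))) ⟹
        Term.equal (Term.var (Sum.inr 1)) (Term.var (Sum.inr 0))))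

lemma realize_uniqueSentence (c : ℕ → M) (φ : L.Formula (ℕ ⊕ Fin 1)) :
    (uniqueSentence φ).Realize c ↔ ∃ a : M, Ddef c φ a := by
  rw [uniqueSentence, realize_iExsF]
  constructor
  · rintro ⟨i, hi⟩
    rw [Formula.realize_inf] at hi
    obtain ⟨h1, h2⟩ := hi
    refine ⟨i 0, ?_, ?_⟩
    · convert h1 using 1
      funext z; rcases z with m | j; · rfl
      · rw [Subsingleton.elim j 0]; rfl
    · intro x hx
      rw [realize_iAllsF] at h2
      have := h2 (fun _ => x)
      rw [Formula.realize_imp, Formula.realize_relabel, Formula.realize_equal] at this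
      have hxin : φ.Realize ((fun a => Sum.elim (fun a => Sum.elim c i (id a))
          (fun _ : Fin 1 => x) (Sum.elim (fun m => Sum.inl (Sum.inl m))
            ![Sum.inl (Sum.inr 0), Sum.inr 0] a)) ∘ Sum.map id fun _ => (1 : Fin 2)) := by
        convert hx using 1
        funext z; rcases z with m | j
        · rfl
        · rw [Subsingleton.elim j 0]
          simp
      have := this hxin
      simpa using this
  · rintro ⟨a, ha, hu⟩
    refine ⟨fun _ => a, ?_⟩
    rw [Formula.realize_inf]
    constructor
    · exact ha
    · rw [realize_iAllsF]
      intro i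
      rw [Formula.realize_imp, Formula.realize_relabel, Formula.realize_equal]
      intro hφ
      have : φ.Realize (Sum.elim c (fun _ => i 0)) := by
        convert hφ using 1
        funext z; rcases z with m | j
        · rfl
        · rw [Subsingleton.elim j 0]
          simp
      have := hu _ this
      simpa using this


/-- Absorb the last free element-variable of `θ` using its defining formula `φ`. -/
noncomputable def absorb {n : ℕ} (φ : L.Formula (ℕ ⊕ Fin 1)) (θ : L.Formula (ℕ ⊕ Fin (n + 1))) :
    L.Formula (ℕ ⊕ Fin n) :=
  iExsF (β := ℕ ⊕ Fin n) (γ := Fin 1)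
    (Sum.elim (fun m => Sum.inl (Sum.inl m))
      (Fin.lastCases (Sum.inr 0) (fun j => Sum.inl (Sum.inr j))))
    ((φ.relabel (Sum.map id (fun _ => Fin.last n))) ⊓ θ)

lemma realize_absorb {n : ℕ} (φ : L.Formula (ℕ ⊕ Fin 1)) (θ : L.Formula (ℕ ⊕ Fin (n + 1)))
    (c : ℕ → M) (v : Fin n → M) {a : M} (h : Ddef c φ a) :
    (absorb φ θ).Realize (Sum.elim c v) ↔ θ.Realize (Sum.elim c (Fin.snoc v a)) := by
  rw [absorb, realize_iExsF]
  have key : ∀ (i : Fin 1 → M),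
      (fun z => Sum.elim (Sum.elim c v) i (Sum.elim (fun m => Sum.inl (Sum.inl m))
        (Fin.lastCases (Sum.inr 0) (fun j => Sum.inl (Sum.inr j))) z))
      = Sum.elim c (Fin.snoc v (i 0)) := by
    intro i
    funext z
    rcases z with m | j
    · rfl
    · refine Fin.lastCases ?_ (fun j' => ?_) j
      · simp
      · simp
  constructor
  · rintro ⟨i, hi⟩
    rw [key] at hi
    rw [Formula.realize_inf, Formula.realize_relabel] at hi
    obtain ⟨h1, h2⟩ := hi
    have hx : φ.Realize (Sum.elim c (fun _ => i 0)) := by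
      convert h1 using 1
      funext z
      rcases z with m | j
      · rfl
      · simp
    have := h.2 _ hx
    rwa [this] at h2
  · intro hθ
    refine ⟨fun _ => a, ?_⟩
    rw [key, Formula.realize_inf, Formula.realize_relabel]
    refine ⟨?_, hθ⟩
    have := h.1
    convert this using 1
    funext z
    rcases z with m | j
    · rfl
    · simp

/-- Transfer of formulas with constant parameters and definable-element parameters. -/
lemma transfer (cM : ℕ → M) (cP : ℕ → P)
    (hS : ∀ ψ : L.Formula ℕ, ψ.Realize cM ↔ ψ.Realize cP) :
    ∀ (n : ℕ) (θ : L.Formula (ℕ ⊕ Fin n)) (a : Fin n → M) (b : Fin n → P),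
      (∀ i, ∃ φ : L.Formula (ℕ ⊕ Fin 1), Ddef cM φ (a i) ∧ Ddef cP φ (b i)) →
      (θ.Realize (Sum.elim cM a) ↔ θ.Realize (Sum.elim cP b)) := by
  intro n
  induction n with
  | zero =>
    intro θ a b _
    have hM : θ.Realize (Sum.elim cM a) ↔ (θ.relabel (Sum.elim id Fin.elim0)).Realize cM := by
      rw [Formula.realize_relabel]
      refine iff_of_eq (congrArg _ ?_)
      funext z; rcases z with m | j
      · rfl
      · exact j.elim0
    have hP : θ.Realize (Sum.elim cP b) ↔ (θ.relabel (Sum.elim id Fin.elim0)).Realize cP := by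
      rw [Formula.realize_relabel]
      refine iff_of_eq (congrArg _ ?_)
      funext z; rcases z with m | j
      · rfl
      · exact j.elim0
    rw [hM, hP]
    exact hS _
  | succ n ih =>
    intro θ a b hdef
    obtain ⟨φ, hφM, hφP⟩ := hdef (Fin.last n)
    have ha : a = Fin.snoc (Fin.init a) (a (Fin.last n)) := (Fin.snoc_init_self a).symm
    have hb : b = Fin.snoc (Fin.init b) (b (Fin.last n)) := (Fin.snoc_init_self b).symm
    rw [ha, hb, ← realize_absorb φ θ cM (Fin.init a) hφM,
      ← realize_absorb φ θ cP (Fin.init b) hφP]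
    exact ih (absorb φ θ) (Fin.init a) (Fin.init b) (fun i => hdef i.castSucc)

/-- Any `L`-formula with variables assigned to the constants transfers. -/
lemma sentence_transfer (cM : ℕ → M) (cP : ℕ → P)
    (hsameTh : ∀ (k : ℕ) (φ : L.Formula (Fin k)) (ι : Fin k → ℕ),
      φ.Realize (cM ∘ ι) ↔ φ.Realize (cP ∘ ι)) :
    ∀ ψ : L.Formula ℕ, ψ.Realize cM ↔ ψ.Realize cP := by
  classical
  intro ψ
  have hsub : ↑ψ.freeVarFinset ⊆ (↑ψ.freeVarFinset : Set ℕ) := subset_rfl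
  set ψ' : L.Formula (↑ψ.freeVarFinset : Set ℕ) :=
    ψ.restrictFreeVar (Set.inclusion hsub) with hψ'
  let e := Fintype.equivFin (↑ψ.freeVarFinset : Set ℕ)
  have key := hsameTh _ (ψ'.relabel e) (fun j => (e.symm j : ℕ))
  rw [Formula.realize_relabel, Formula.realize_relabel] at key
  have hMc : ψ'.Realize ((cM ∘ fun j => ((e.symm j : ℕ))) ∘ ⇑e) ↔ ψ.Realize cM := by
    have hc : ((cM ∘ fun j => ((e.symm j : ℕ))) ∘ ⇑e)
        = cM ∘ (fun z : (↑ψ.freeVarFinset : Set ℕ) => (z : ℕ)) := by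
      funext z
      simp
    rw [hc]
    exact BoundedFormula.realize_restrictFreeVar' hsub
  have hPc : ψ'.Realize ((cP ∘ fun j => ((e.symm j : ℕ))) ∘ ⇑e) ↔ ψ.Realize cP := by
    have hc : ((cP ∘ fun j => ((e.symm j : ℕ))) ∘ ⇑e)
        = cP ∘ (fun z : (↑ψ.freeVarFinset : Set ℕ) => (z : ℕ)) := by
      funext z
      simp
    rw [hc]
    exact BoundedFormula.realize_restrictFreeVar' hsub
  exact hMc.symm.trans (key.trans hPc)


lemma pair_exists (cM : ℕ → M) (cP : ℕ → P)
    (hS : ∀ ψ : L.Formula ℕ, ψ.Realize cM ↔ ψ.Realize cP) {a : M}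
    (ha : a ∈ dclOfConstants (L := L) cM) :
    ∃ b ∈ dclOfConstants (L := L) cP,
      ∃ φ : L.Formula (ℕ ⊕ Fin 1), Ddef cM φ a ∧ Ddef cP φ b := by
  obtain ⟨k, φ₀, ι, hD⟩ := (mem_dcl_iff cM a).1 ha
  set φ := φ₀.relabel (gA ι) with hφ
  have hu : (uniqueSentence φ).Realize cM := (realize_uniqueSentence cM φ).2 ⟨a, hD⟩
  obtain ⟨b, hb⟩ := (realize_uniqueSentence cP φ).1 ((hS _).1 hu)
  exact ⟨b, (mem_dcl_iff cP b).2 ⟨k, φ₀, ι, hb⟩, φ, hD, hb⟩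

lemma pair_eq_iff (cM : ℕ → M) (cP : ℕ → P)
    (hS : ∀ ψ : L.Formula ℕ, ψ.Realize cM ↔ ψ.Realize cP)
    {a a' : M} {b b' : P}
    (h1 : ∃ φ : L.Formula (ℕ ⊕ Fin 1), Ddef cM φ a ∧ Ddef cP φ b)
    (h2 : ∃ φ : L.Formula (ℕ ⊕ Fin 1), Ddef cM φ a' ∧ Ddef cP φ b') :
    a = a' ↔ b = b' := by
  have key := transfer cM cP hS 2
    (Term.equal (Term.var (Sum.inr 0)) (Term.var (Sum.inr 1))) ![a, a'] ![b, b'] ?_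
  · rw [Formula.realize_equal, Formula.realize_equal] at key
    simpa using key
  · intro i
    fin_cases i
    · exact h1
    · exact h2

end DclAux

open DclAux

/-- If `M` and `P` are models of the same complete theory in the
language `L` expanded by countably many constants (expressed by saying that the
same formulas with constant parameters hold in both), and the definable closures
of the constants are elementary substructures of the respective reducts (stated
via the Tarski–Vaught criterion), then the definable closures are isomorphic:
there is a bijection between them preserving all `L`-formulas. -/
theorem dcl_independent_of_model {L : Language} {M P : Type*}
    [L.Structure M] [L.Structure P] (cM : ℕ → M) (cP : ℕ → P)
    -- M and P are models of the same complete consistent theory in L ∪ {constants}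
    (hsameTh : ∀ (k : ℕ) (φ : L.Formula (Fin k)) (ι : Fin k → ℕ),
      φ.Realize (cM ∘ ι) ↔ φ.Realize (cP ∘ ι))
    -- the definable closure of the constants is an elementary substructure of M
    (hTV_M : ∀ (k : ℕ) (φ : L.Formula (Fin (k + 1))) (v : Fin k → M),
      (∀ i, v i ∈ dclOfConstants (L := L) cM) → (∃ x : M, φ.Realize (Fin.cons x v)) →
        ∃ x ∈ dclOfConstants (L := L) cM, φ.Realize (Fin.cons x v))
    -- the definable closure of the constants is an elementary substructure of P
    (hTV_P : ∀ (k : ℕ) (φ : L.Formula (Fin (k + 1))) (v : Fin k → P),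
      (∀ i, v i ∈ dclOfConstants (L := L) cP) → (∃ x : P, φ.Realize (Fin.cons x v)) →
        ∃ x ∈ dclOfConstants (L := L) cP, φ.Realize (Fin.cons x v)) :
    ∃ g : (dclOfConstants (L := L) cM) ≃ (dclOfConstants (L := L) cP),
      (∀ i : ℕ, ∀ h : cM i ∈ dclOfConstants (L := L) cM, (g ⟨cM i, h⟩ : P) = cP i) ∧
      ∀ (n : ℕ) (φ : L.Formula (Fin n)) (v : Fin n → dclOfConstants (L := L) cM),
        Formula.Realize (M := M) φ (fun i => (v i : M)) ↔ Formula.Realize (M := P) φ (fun i => (g (v i) : P)) := by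
  classical
  have hS := sentence_transfer cM cP hsameTh
  have hS' : ∀ ψ : L.Formula ℕ, ψ.Realize cP ↔ ψ.Realize cM := fun ψ => (hS ψ).symm
  have hF : ∀ a : dclOfConstants (L := L) cM, ∃ b, b ∈ dclOfConstants (L := L) cP ∧
      ∃ φ : L.Formula (ℕ ⊕ Fin 1), Ddef cM φ (a : M) ∧ Ddef cP φ b := by
    intro a
    obtain ⟨b, hb1, hb2⟩ := pair_exists cM cP hS a.2
    exact ⟨b, hb1, hb2⟩
  choose fb hfb1 hfb2 using hF
  have hB : ∀ b : dclOfConstants (L := L) cP, ∃ a, a ∈ dclOfConstants (L := L) cM ∧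
      ∃ φ : L.Formula (ℕ ⊕ Fin 1), Ddef cM φ a ∧ Ddef cP φ (b : P) := by
    intro b
    obtain ⟨a, ha1, φ, h1, h2⟩ := pair_exists cP cM hS' b.2
    exact ⟨a, ha1, φ, h2, h1⟩
  choose fa hfa1 hfa2 using hB
  refine ⟨⟨fun a => ⟨fb a, hfb1 a⟩, fun b => ⟨fa b, hfa1 b⟩, ?_, ?_⟩, ?_, ?_⟩
  · intro a
    have h1 := hfb2 a
    have h2 := hfa2 ⟨fb a, hfb1 a⟩
    exact Subtype.ext (((pair_eq_iff cM cP hS h2 h1).2 rfl))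
  · intro b
    have h1 := hfa2 b
    have h2 := hfb2 ⟨fa b, hfa1 b⟩
    exact Subtype.ext (((pair_eq_iff cM cP hS h2 h1).1 rfl))
  · intro i h
    have h1 := hfb2 ⟨cM i, h⟩
    have h2 : ∃ φ : L.Formula (ℕ ⊕ Fin 1), Ddef cM φ (cM i) ∧ Ddef cP φ (cP i) := by
      refine ⟨Term.equal (Term.var (Sum.inr 0)) (Term.var (Sum.inl i)), ?_, ?_⟩ <;>
        constructor <;>
          simp [Ddef, Formula.realize_equal]
    exact (pair_eq_iff cM cP hS h1 h2).1 rfl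
  · intro n θ v
    have key := transfer cM cP hS n (θ.relabel Sum.inr)
      (fun i => (v i : M)) (fun i => fb (v i)) (fun i => hfb2 (v i))
    rw [Formula.realize_relabel, Formula.realize_relabel] at key
    exact key
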